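/- For every integer n ≥ 1, the 2-rank of the special orthogonal group SO(n) of n×n real orthogonal matrices of determinant 1 equals n − 1. -/

import Mathlib

/-- The set of natural numbers `r` such that the group `G` contains a subgroup isomorphic to
the elementary abelian 2-group `(ℤ/2ℤ)^r`. -/
def elementaryTwoRanks (G : Type*) [Group G] : Set ℕ :=
  {r | ∃ H : Subgroup G, Nonempty (H ≃* Multiplicative (Fin r → ZMod 2))}

/-- The 2-rank `r₂(G)` of a group `G`: the supremum of the integers `r` such that `G` contains
a subgroup isomorphic to the elementary abelian 2-group `(ℤ/2ℤ)^r`. -/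
noncomputable def twoRank (G : Type*) [Group G] : ℕ :=
  sSup (elementaryTwoRanks G)

/-- The determinant, as a homomorphism from the orthogonal group into the unitary scalars. -/
def orthogonalDet (n : ℕ) : Matrix.orthogonalGroup (Fin n) ℝ →* unitary ℝ where
  toFun A := ⟨(A : Matrix (Fin n) (Fin n) ℝ).det, Matrix.det_of_mem_unitary A.2⟩
  map_one' := by ext; simp
  map_mul' := by intro a b; ext; simp

/-- The special orthogonal group `SO(n)`: real orthogonal `n × n` matrices of determinant one,
as the kernel of the determinant homomorphism on the orthogonal group. -/
def SO (n : ℕ) : Subgroup (Matrix.orthogonalGroup (Fin n) ℝ) := (orthogonalDet n).ker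

/-!
The diagonal sign matrices with an even number of entries `-1` form a subgroup of `SO(n)`
isomorphic to `(ℤ/2ℤ)^(n-1)`. Conversely, the elements of an elementary abelian `2`-subgroup of
`SO(n)` are commuting orthogonal involutions, hence commuting symmetric matrices. Diagonalising
them simultaneously writes each one, in a common basis, as a diagonal matrix of signs whose
product is its determinant `1`; this embeds the subgroup into the even sign vectors, so it has
order at most `2^(n-1)`.
-/

open Matrix Module
open scoped Function

theorem LinearMap.IsSymmetric.exists_basis_toMatrix_eq_diagonal_of_commute
    {𝕜 E ι : Type*} [RCLike 𝕜] [NormedAddCommGroup E] [InnerProductSpace 𝕜 E]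
    [FiniteDimensional 𝕜 E] {T : ι → Module.End 𝕜 E} (hT : ∀ i, (T i).IsSymmetric)
    (hC : Pairwise (Commute on T)) {n : ℕ} (hn : finrank 𝕜 E = n) :
    ∃ (b : Basis (Fin n) 𝕜 E) (μ : ι → Fin n → 𝕜),
      ∀ i, LinearMap.toMatrix b b (T i) = diagonal (μ i) := by
  classical
  have hV := directSum_isInternal_of_pairwise_commute hT hC
  let c := hV.collectedBasis fun χ => finBasis 𝕜 ↥(⨅ j, End.eigenspace (T j) (χ j))
  let e := (c.indexEquiv (finBasis 𝕜 E)).trans (finCongr hn)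
  refine ⟨c.reindex e, fun i k => (e.symm k).1 i, fun i => ?_⟩
  suffices T i = toLin (c.reindex e) (c.reindex e) (diagonal fun k => (e.symm k).1 i) by
    rw [this, LinearMap.toMatrix_toLin]
  refine (c.reindex e).ext fun k => ?_
  rw [(hasEigenvector_toLin_diagonal _ k _).apply_eq_smul, Basis.reindex_apply,
    ← End.mem_eigenspace_iff]
  exact Submodule.mem_iInf _ |>.mp (hV.collectedBasis_mem (fun χ => finBasis 𝕜 _) (e.symm k)) i

theorem Unitary.isSelfAdjoint_coe_of_mul_self_eq_one {R : Type*} [Monoid R] [StarMul R]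
    {U : unitary R} (hU : U * U = 1) : IsSelfAdjoint (U : R) := by
  rw [IsSelfAdjoint, ← Unitary.coe_star, Unitary.star_eq_inv, inv_eq_of_mul_eq_one_right hU]

theorem exists_units_int_cast_eq_of_mul_self_eq_one {R : Type*} [Ring R] [NoZeroDivisors R]
    {x : R} (hx : x * x = 1) : ∃ u : ℤˣ, ((u : ℤ) : R) = x := by
  rcases mul_self_eq_one_iff.mp hx with rfl | rfl
  exacts [⟨1, by simp⟩, ⟨-1, by simp⟩]

theorem LinearMap.IsSymmetric.exists_basis_toMatrix_eq_diagonal_units_of_commute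
    {𝕜 E ι : Type*} [RCLike 𝕜] [NormedAddCommGroup E] [InnerProductSpace 𝕜 E]
    [FiniteDimensional 𝕜 E] {T : ι → Module.End 𝕜 E} (hT : ∀ i, (T i).IsSymmetric)
    (hC : Pairwise (Commute on T)) (hinv : ∀ i, T i * T i = 1) {n : ℕ} (hn : finrank 𝕜 E = n) :
    ∃ (b : Basis (Fin n) 𝕜 E) (s : ι → Fin n → ℤˣ),
      ∀ i, LinearMap.toMatrix b b (T i) = diagonal fun k => ((s i k : ℤ) : 𝕜) := by
  obtain ⟨b, μ, hμ⟩ := exists_basis_toMatrix_eq_diagonal_of_commute hT hC hn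
  have hμμ : ∀ i k, μ i k * μ i k = 1 := fun i k => by
    have := congrArg (LinearMap.toMatrix b b) (hinv i)
    rw [LinearMap.toMatrix_mul, LinearMap.toMatrix_one, hμ, diagonal_mul_diagonal] at this
    simpa using congrFun (congrFun this k) k
  choose s hs using fun i k => exists_units_int_cast_eq_of_mul_self_eq_one (hμμ i k)
  exact ⟨b, s, fun i => by simp only [hs, hμ]⟩

def evenSigns (ι : Type*) [Fintype ι] : Subgroup (ι → ℤˣ) where
  carrier := {s | ∏ i, s i = 1}
  mul_mem' {s t} hs ht := by simp_all [Finset.prod_mul_distrib]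
  one_mem' := by simp
  inv_mem' {s} hs := by simp_all

def signDiagonal (ι : Type*) [Fintype ι] [DecidableEq ι] :
    (ι → ℤˣ) →* orthogonalGroup ι ℝ where
  toFun s := ⟨diagonal fun i => ((s i : ℤ) : ℝ), by
    rw [mem_orthogonalGroup_iff, diagonal_transpose, diagonal_mul_diagonal]
    simp [← Int.cast_mul, ← Units.val_mul]⟩
  map_one' := by ext : 1; simp
  map_mul' s t := by ext : 1; simp [diagonal_mul_diagonal]

theorem signDiagonal_injective (ι : Type*) [Fintype ι] [DecidableEq ι] :
    Function.Injective (signDiagonal ι) := fun s t hst => by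
  funext i
  have := congrFun (congrFun (congrArg Subtype.val hst) i) i
  simpa [signDiagonal, Units.ext_iff] using this

theorem mem_SO_iff {n : ℕ} {A : orthogonalGroup (Fin n) ℝ} :
    A ∈ SO n ↔ (A : Matrix (Fin n) (Fin n) ℝ).det = 1 := by
  rw [SO, MonoidHom.mem_ker, Subtype.ext_iff]
  rfl

theorem signDiagonal_mem_SO_iff {n : ℕ} {s : Fin n → ℤˣ} :
    signDiagonal (Fin n) s ∈ SO n ↔ s ∈ evenSigns (Fin n) := by
  rw [mem_SO_iff]
  simp only [signDiagonal, MonoidHom.coe_mk, OneHom.coe_mk, det_diagonal, ← Int.cast_prod,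
    ← Units.coe_prod, Int.cast_eq_one, Units.val_eq_one]
  rfl

theorem card_le_card_evenSigns {n : ℕ} (H : Subgroup (SO n)) (hH : ∀ h : H, h * h = 1) :
    Nat.card H ≤ Nat.card (evenSigns (Fin n)) := by
  let b₀ := (EuclideanSpace.basisFun (Fin n) ℝ).toBasis
  let ρ : H →* Module.End ℝ (EuclideanSpace ℝ (Fin n)) := (toLinAlgEquiv b₀).toMonoidHom.comp
    ((orthogonalGroup (Fin n) ℝ).subtype.comp ((SO n).subtype.comp H.subtype))
  have hρ : Function.Injective ρ := (toLinAlgEquiv b₀).injective.comp <|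
    Subtype.val_injective.comp <| Subtype.val_injective.comp Subtype.val_injective
  have hsymm : ∀ h, (ρ h).IsSymmetric := fun h => isSymmetric_toEuclideanLin_iff.mpr <|
    Unitary.isSelfAdjoint_coe_of_mul_self_eq_one <| by
      rw [← map_mul, hH h, map_one]
  have hcomm : Pairwise (Commute on ρ) := fun g h _ =>
    (Commute.of_orderOf_dvd_two (fun g => orderOf_dvd_of_pow_eq_one (by rw [sq, hH g])) g h).map ρ
  obtain ⟨b, s, hs⟩ := LinearMap.IsSymmetric.exists_basis_toMatrix_eq_diagonal_units_of_commute
    hsymm hcomm (fun h => by rw [← map_mul, hH, map_one]) finrank_euclideanSpace_fin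
  have hmem : ∀ h, s h ∈ evenSigns (Fin n) := fun h => by
    rw [← signDiagonal_mem_SO_iff, mem_SO_iff]
    calc det (signDiagonal (Fin n) (s h) : Matrix (Fin n) (Fin n) ℝ)
        = det (LinearMap.toMatrix b b (ρ h)) := by rw [hs]; rfl
      _ = 1 := by
        rw [LinearMap.det_toMatrix, ← mem_SO_iff.mp (h : SO n).2]
        exact LinearMap.det_toLin b₀ _
  refine Nat.card_le_card_of_injective (fun h => ⟨s h, hmem h⟩) fun g h hgh => hρ ?_
  apply (LinearMap.toMatrix b b).injective
  rw [hs, hs, (Subtype.mk.inj hgh : s g = s h)]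

def evenSignsToSO (n : ℕ) : evenSigns (Fin n) →* SO n :=
  ((signDiagonal (Fin n)).comp (evenSigns (Fin n)).subtype).codRestrict (SO n)
    fun s => signDiagonal_mem_SO_iff.mpr s.2

theorem evenSignsToSO_injective (n : ℕ) : Function.Injective (evenSignsToSO n) :=
  fun _ _ hst => Subtype.ext <| signDiagonal_injective _ <| congrArg Subtype.val hst

def evenSignsSuccEquiv (m : ℕ) : evenSigns (Fin (m + 1)) ≃* (Fin m → ℤˣ) where
  toFun s i := s.1 i.castSucc
  invFun t := ⟨Fin.snoc t (∏ i, t i)⁻¹, by simp [evenSigns, Fin.prod_univ_castSucc]⟩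
  left_inv s := by
    ext i : 2
    induction i using Fin.lastCases with
    | last =>
      have hs : ∏ i, s.1 i = 1 := s.2
      rw [Fin.prod_univ_castSucc] at hs
      simp [eq_inv_of_mul_eq_one_right hs]
    | cast i => simp
  right_inv t := by funext i; simp
  map_mul' _ _ := rfl

noncomputable def evenSignsSuccEquivZModTwo (m : ℕ) :
    evenSigns (Fin (m + 1)) ≃* Multiplicative (Fin m → ZMod 2) :=
  (evenSignsSuccEquiv m).trans <|
    (MulEquiv.piCongrRight fun _ => mulEquivOfCyclicCardEq (by simp)).trans
      (MulEquiv.funMultiplicative _ _).symm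

theorem mul_self_eq_one_of_mulEquiv {G ι : Type*} [Group G]
    (e : G ≃* Multiplicative (ι → ZMod 2)) (g : G) : g * g = 1 :=
  e.injective <| by
    rw [map_mul, map_one]
    exact Multiplicative.toAdd.injective (funext fun i => CharTwo.add_self_eq_zero _)

theorem mem_elementaryTwoRanks_SO (m : ℕ) : m ∈ elementaryTwoRanks (SO (m + 1)) :=
  ⟨(evenSignsToSO _).range,
    ⟨(MonoidHom.ofInjective (evenSignsToSO_injective _)).symm.trans (evenSignsSuccEquivZModTwo m)⟩⟩

theorem le_of_mem_elementaryTwoRanks_SO {m r : ℕ} (hr : r ∈ elementaryTwoRanks (SO (m + 1))) :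
    r ≤ m := by
  obtain ⟨H, ⟨e⟩⟩ := hr
  have hcard := card_le_card_evenSigns H (mul_self_eq_one_of_mulEquiv e)
  rw [Nat.card_congr e.toEquiv, Nat.card_congr (evenSignsSuccEquivZModTwo m).toEquiv] at hcard
  have hpow : 2 ^ r ≤ 2 ^ m := by simpa using hcard
  exact (Nat.pow_le_pow_iff_right (by norm_num)).mp hpow

/-- The 2-rank of the special orthogonal group `SO(n)` equals `n - 1`. -/
theorem twoRank_specialOrthogonalGroup (n : ℕ) (hn : 1 ≤ n) : twoRank (SO n) = n - 1 := by
  obtain ⟨m, rfl⟩ : ∃ m, n = m + 1 := ⟨n - 1, by omega⟩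
  rw [Nat.add_sub_cancel]
  exact IsGreatest.csSup_eq
    ⟨mem_elementaryTwoRanks_SO m, fun _ hr => le_of_mem_elementaryTwoRanks_SO hr⟩
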